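/- arXiv:1202.0657 — 2 statements merged into one kernel-verified Lean document; each statement's English description precedes it below -/
import Mathlib

section
/- There is a constant C > 0 such that for every continuously differentiable compactly supported f : ℝ → ℝ with f(0) = 0 one has ∫_{-∞}^{0} ((1-z)/z)² f(z)² dz ≤ C ∫_{-∞}^{0} ( f(z)² + f′(z)² ) dz. -/
/-!
Write `h = dslope f c`, so that `(z - c) h z = f z - f c`. Away from `c`, the function
`(c - z) h(z)²` has derivative `G = h² - 2 h f'`, and `2 G + 4 f'² - h² = (h - 2 f')² ≥ 0`.
Integrating over `[a, c]`, the boundary term `-(c - a) h(a)²` is nonpositive, which gives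
Hardy's inequality `∫_{-∞}^c h² ≤ 4 ∫_{-∞}^c f'²`. When `f 0 = 0` we have
`(1 - z) / z · f z = h z - f z` with `c = 0`, so the left side is at most
`2 ∫ h² + 2 ∫ f² ≤ 8 ∫ (f² + f'²)`.
-/

open MeasureTheory Set Filter Topology

variable {f : ℝ → ℝ} {a c : ℝ}

theorem hasDerivAt_sub_mul_dslope_sq (hf : Differentiable ℝ f) {z : ℝ} (hz : z ≠ c) :
    HasDerivAt (fun x => (c - x) * dslope f c x ^ 2)
      (dslope f c z ^ 2 - 2 * dslope f c z * deriv f z) z := by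
  have hzc : z - c ≠ 0 := sub_ne_zero.2 hz
  have hslope : dslope f c =ᶠ[𝓝 z] fun x => (f x - f c) / (x - c) :=
    (dslope_eventuallyEq_slope_of_ne f hz).trans
      (Eventually.of_forall fun x => by simp only [slope_def_field])
  have hquot : HasDerivAt (fun x => (f x - f c) / (x - c))
      ((deriv f z * (z - c) - (f z - f c) * 1) / (z - c) ^ 2) z :=
    ((hf z).hasDerivAt.sub_const _).div ((hasDerivAt_id z).sub_const c) hzc
  refine (((hasDerivAt_id' z).const_sub c).mul
    ((hquot.congr_of_eventuallyEq hslope).pow 2)).congr_deriv ?_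
  rw [Pi.pow_apply, dslope_of_ne _ hz, slope_def_field]
  simp only [Nat.cast_ofNat, Nat.reduceSub, pow_one]
  field_simp
  ring

theorem ContDiff.continuous_dslope (hf : ContDiff ℝ 1 f) (c : ℝ) : Continuous (dslope f c) :=
  continuousOn_univ.1 <| (continuousOn_dslope univ_mem).2
    ⟨hf.continuous.continuousOn, hf.differentiable one_ne_zero c⟩

theorem integral_dslope_sq_le (hf : ContDiff ℝ 1 f) (hac : a ≤ c) :
    ∫ z in a..c, dslope f c z ^ 2 ≤ 4 * ∫ z in a..c, deriv f z ^ 2 := by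
  have hh : Continuous (dslope f c) := hf.continuous_dslope c
  have hf' : Continuous (deriv f) := hf.continuous_deriv le_rfl
  set G : ℝ → ℝ := fun z => dslope f c z ^ 2 - 2 * dslope f c z * deriv f z
  have hFTC : ∫ z in a..c, G z = -((c - a) * dslope f c a ^ 2) := by
    rw [intervalIntegral.integral_eq_sub_of_hasDerivAt_of_le hac
      (Continuous.continuousOn (by fun_prop))
      (fun z hz => hasDerivAt_sub_mul_dslope_sq (hf.differentiable one_ne_zero) hz.2.ne)
      (Continuous.intervalIntegrable (by fun_prop) a c)]
    ring
  have hpt : ∀ z, dslope f c z ^ 2 ≤ 2 * G z + 4 * deriv f z ^ 2 := fun z => by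
    nlinarith [sq_nonneg (dslope f c z - 2 * deriv f z)]
  calc ∫ z in a..c, dslope f c z ^ 2
      ≤ ∫ z in a..c, (2 * G z + 4 * deriv f z ^ 2) :=
        intervalIntegral.integral_mono_on hac (Continuous.intervalIntegrable (by fun_prop) a c)
          (Continuous.intervalIntegrable (by fun_prop) a c) fun z _ => hpt z
    _ = 2 * -((c - a) * dslope f c a ^ 2) + 4 * ∫ z in a..c, deriv f z ^ 2 := by
        rw [intervalIntegral.integral_add (Continuous.intervalIntegrable (by fun_prop) a c)
            (Continuous.intervalIntegrable (by fun_prop) a c),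
          intervalIntegral.integral_const_mul, intervalIntegral.integral_const_mul, hFTC]
    _ ≤ 4 * ∫ z in a..c, deriv f z ^ 2 := by
        have : 0 ≤ (c - a) * dslope f c a ^ 2 := mul_nonneg (sub_nonneg.2 hac) (sq_nonneg _)
        linarith

theorem Continuous.lintegral_Ioo_ofReal_eq {φ : ℝ → ℝ} (hφ : Continuous φ) (hφ0 : ∀ z, 0 ≤ φ z)
    {a b : ℝ} (hab : a ≤ b) :
    ∫⁻ z in Ioo a b, ENNReal.ofReal (φ z) = ENNReal.ofReal (∫ z in a..b, φ z) := by
  rw [intervalIntegral.integral_of_le hab, integral_Ioc_eq_integral_Ioo,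
    ofReal_integral_eq_lintegral_ofReal (hφ.integrableOn_Icc.mono_set Ioo_subset_Icc_self)
      (ae_of_all _ hφ0)]

theorem iUnion_Ioo_sub_natCast (c : ℝ) : ⋃ n : ℕ, Ioo (c - n) c = Iio c := by
  refine Subset.antisymm (iUnion_subset fun n => Ioo_subset_Iio_self) fun z hz => ?_
  obtain ⟨n, hn⟩ := exists_nat_gt (c - z)
  exact mem_iUnion.2 ⟨n, by linarith, hz⟩

theorem lintegral_Iio_dslope_sq_le (hf : ContDiff ℝ 1 f) (c : ℝ) :
    ∫⁻ z in Iio c, ENNReal.ofReal (dslope f c z ^ 2)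
      ≤ 4 * ∫⁻ z in Iio c, ENNReal.ofReal (deriv f z ^ 2) := by
  have hmono : Monotone fun n : ℕ => Ioo (c - n) c := fun m n hmn =>
    Ioo_subset_Ioo_left (by gcongr)
  rw [← iUnion_Ioo_sub_natCast c, setLIntegral_iUnion_of_directed _ hmono.directed_le,
    iUnion_Ioo_sub_natCast c]
  refine iSup_le fun n => ?_
  have hac : c - n ≤ c := sub_le_self c n.cast_nonneg
  have hf' : Continuous (deriv f) := hf.continuous_deriv le_rfl
  calc ∫⁻ z in Ioo (c - n) c, ENNReal.ofReal (dslope f c z ^ 2)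
      = ENNReal.ofReal (∫ z in (c - n)..c, dslope f c z ^ 2) :=
        ((hf.continuous_dslope c).pow 2).lintegral_Ioo_ofReal_eq (fun z => sq_nonneg _) hac
    _ ≤ ENNReal.ofReal (4 * ∫ z in (c - n)..c, deriv f z ^ 2) :=
        ENNReal.ofReal_le_ofReal (integral_dslope_sq_le hf hac)
    _ = 4 * ∫⁻ z in Ioo (c - n) c, ENNReal.ofReal (deriv f z ^ 2) := by
        rw [ENNReal.ofReal_mul zero_le_four, ENNReal.ofReal_ofNat,
          (hf'.pow 2).lintegral_Ioo_ofReal_eq (φ := fun z => deriv f z ^ 2)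
            (fun z => sq_nonneg _) hac]
    _ ≤ 4 * ∫⁻ z in Iio c, ENNReal.ofReal (deriv f z ^ 2) := by
        gcongr
        exact Ioo_subset_Iio_self

theorem sq_one_sub_div_mul_sq_le (h0 : f 0 = 0) {z : ℝ} (hz : z ≠ 0) :
    ((1 - z) / z) ^ 2 * f z ^ 2 ≤ 2 * dslope f 0 z ^ 2 + 2 * f z ^ 2 := by
  have hdslope : dslope f 0 z = f z / z := by
    rw [dslope_of_ne _ hz, slope_def_field, h0, sub_zero, sub_zero]
  have hsplit : ((1 - z) / z) ^ 2 * f z ^ 2 = (dslope f 0 z + -f z) ^ 2 := by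
    rw [hdslope]
    field_simp
    ring
  rw [hsplit, ← neg_sq (f z), ← mul_add]
  exact add_sq_le

/-- Second Hardy-type inequality of Lemma 12.3: there is a constant `C > 0` such that for
every continuously differentiable compactly supported `f : ℝ → ℝ` with `f 0 = 0`,
`∫_{-∞}^{0} ((1-z)/z)² f(z)² dz ≤ C ∫_{-∞}^{0} (f(z)² + f′(z)²) dz`. -/
theorem hardy_inequality_two :
    ∃ C : ℝ, 0 < C ∧
      ∀ f : ℝ → ℝ, ContDiff ℝ 1 f → HasCompactSupport f → f 0 = 0 →
        ∫⁻ z in Set.Iio (0 : ℝ), ENNReal.ofReal (((1 - z) / z) ^ 2 * f z ^ 2)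
          ≤ ENNReal.ofReal C *
            ∫⁻ z in Set.Iio (0 : ℝ), ENNReal.ofReal (f z ^ 2 + deriv f z ^ 2) := by
  refine ⟨8, by norm_num, fun f hf _ h0 => ?_⟩
  have hmeas : ∀ g : ℝ → ℝ, Continuous g → Measurable fun z => ENNReal.ofReal (g z ^ 2) :=
    fun g hg => (hg.measurable.pow_const 2).ennreal_ofReal
  have hpt : ∀ z ∈ Iio (0 : ℝ), ENNReal.ofReal (((1 - z) / z) ^ 2 * f z ^ 2)
      ≤ 2 * ENNReal.ofReal (dslope f 0 z ^ 2) + 2 * ENNReal.ofReal (f z ^ 2) := fun z hz => by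
    rw [← ENNReal.ofReal_ofNat 2, ← ENNReal.ofReal_mul zero_le_two,
      ← ENNReal.ofReal_mul zero_le_two, ← ENNReal.ofReal_add (by positivity) (by positivity)]
    exact ENNReal.ofReal_le_ofReal (sq_one_sub_div_mul_sq_le h0 (ne_of_lt hz))
  calc ∫⁻ z in Iio 0, ENNReal.ofReal (((1 - z) / z) ^ 2 * f z ^ 2)
      ≤ ∫⁻ z in Iio 0, (2 * ENNReal.ofReal (dslope f 0 z ^ 2) + 2 * ENNReal.ofReal (f z ^ 2)) :=
        setLIntegral_mono' measurableSet_Iio hpt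
    _ = 2 * (∫⁻ z in Iio 0, ENNReal.ofReal (dslope f 0 z ^ 2))
          + 2 * ∫⁻ z in Iio 0, ENNReal.ofReal (f z ^ 2) := by
        rw [lintegral_add_left ((hmeas _ (hf.continuous_dslope 0)).const_mul 2),
          lintegral_const_mul _ (hmeas _ (hf.continuous_dslope 0)),
          lintegral_const_mul _ (hmeas _ hf.continuous)]
    _ ≤ 2 * (4 * ∫⁻ z in Iio 0, ENNReal.ofReal (deriv f z ^ 2))
          + 2 * ∫⁻ z in Iio 0, ENNReal.ofReal (f z ^ 2) := by
        gcongr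
        exact lintegral_Iio_dslope_sq_le hf 0
    _ ≤ 8 * ((∫⁻ z in Iio 0, ENNReal.ofReal (f z ^ 2))
          + ∫⁻ z in Iio 0, ENNReal.ofReal (deriv f z ^ 2)) := by
        rw [mul_add 8, add_comm, ← mul_assoc]
        gcongr <;> norm_num
    _ = ENNReal.ofReal 8 * ∫⁻ z in Iio 0, ENNReal.ofReal (f z ^ 2 + deriv f z ^ 2) := by
        rw [ENNReal.ofReal_ofNat, ← lintegral_add_left (hmeas f hf.continuous)]
        simp only [ENNReal.ofReal_add (sq_nonneg _) (sq_nonneg _)]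
end

section
/- Let Ω ⊆ ℝ³ be open and φ, v : Ω → ℝ three times continuously differentiable with ∂_zφ(x) ≠ 0 for every x ∈ Ω, and let v̇, φ̇ : Ω → ℝ be twice continuously differentiable. Then for all i, j ∈ {1,2,3} the pointwise identity holds on Ω: ∂_i^φ( ∂_j^φ v̇ − (∂_z^φ v)·(∂_j^φ φ̇) ) − (∂_i^φ φ̇)·∂_z^φ(∂_j^φ v) = ∂_i^φ ∂_j^φ ( v̇ − (∂_z^φ v)·φ̇ ) + φ̇ · ∂_z^φ( ∂_i^φ ∂_j^φ v ). -/
/-- The `i`-th partial derivative of a function on `ℝ³` (coordinates `x = (y₁, y₂, z)`,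
with `z` the coordinate of index `2`). -/
noncomputable def pd (i : Fin 3) (f : (Fin 3 → ℝ) → ℝ) (x : Fin 3 → ℝ) : ℝ :=
  fderiv ℝ f x (Pi.single i 1)

/-- The operators `∂ᵢ^φ` associated to `φ`:
`∂₁^φ f = ∂₁f − (∂₁φ/∂_zφ)∂_zf`, `∂₂^φ f = ∂₂f − (∂₂φ/∂_zφ)∂_zf`,
`∂₃^φ f = ∂_z^φ f = (1/∂_zφ)∂_zf`. -/
noncomputable def pdphi (φ : (Fin 3 → ℝ) → ℝ) (i : Fin 3) (f : (Fin 3 → ℝ) → ℝ)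
    (x : Fin 3 → ℝ) : ℝ :=
  if i = 2 then pd 2 f x / pd 2 φ x
  else pd i f x - pd i φ x / pd 2 φ x * pd 2 f x

/-!
The identity is a formal consequence of two facts about the operators `∂ᵢ^φ`: each is a
derivation (it obeys the Leibniz rule), and each commutes with `∂_z^φ`, since all of them are
the coordinate derivatives transported by the change of variables `(y, z) ↦ (y, φ(y, z))`.
With these, the first-order identity
`∂ⱼ^φ (v̇ − (∂_z^φ v) φ̇) = ∂ⱼ^φ v̇ − (∂_z^φ v) ∂ⱼ^φ φ̇ − φ̇ ∂_z^φ ∂ⱼ^φ v`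
holds near every point; applying `∂ᵢ^φ` to it and using the same two facts once more gives
the second-order one.
-/

open Filter Topology

section

variable {φ f g v vdot φdot : (Fin 3 → ℝ) → ℝ} {x : Fin 3 → ℝ} {i j : Fin 3} {m n : WithTop ℕ∞}

lemma pd_sub (hf : DifferentiableAt ℝ f x) (hg : DifferentiableAt ℝ g x) :
    pd i (fun y => f y - g y) x = pd i f x - pd i g x := by
  simp [pd, fderiv_fun_sub hf hg]

lemma pd_mul (hf : DifferentiableAt ℝ f x) (hg : DifferentiableAt ℝ g x) :
    pd i (fun y => f y * g y) x = pd i f x * g x + f x * pd i g x := by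
  simp [pd, fderiv_fun_mul hf hg]
  ring

lemma pd_inv (hg : DifferentiableAt ℝ g x) (hgx : g x ≠ 0) :
    pd i (fun y => (g y)⁻¹) x = -pd i g x / g x ^ 2 := by
  have h : HasFDerivAt (fun y => (g y)⁻¹) ((-(g x ^ 2)⁻¹ : ℝ) • fderiv ℝ g x) x :=
    (hasDerivAt_inv hgx).comp_hasFDerivAt x hg.hasFDerivAt
  simp [pd, h.fderiv]
  ring

lemma pd_div (hf : DifferentiableAt ℝ f x) (hg : DifferentiableAt ℝ g x) (hgx : g x ≠ 0) :
    pd i (fun y => f y / g y) x = (pd i f x * g x - f x * pd i g x) / g x ^ 2 := by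
  simp only [div_eq_mul_inv]
  rw [pd_mul (g := fun y => (g y)⁻¹) hf (hg.inv hgx), pd_inv hg hgx]
  field_simp
  ring

lemma pd_comm (hf : ContDiffAt ℝ 2 f x) : pd i (pd j f) x = pd j (pd i f) x := by
  have hdf : DifferentiableAt ℝ (fderiv ℝ f) x :=
    (hf.fderiv_right (m := 1) le_rfl).differentiableAt one_ne_zero
  have hsnd (k l : Fin 3) :
      pd k (pd l f) x = fderiv ℝ (fderiv ℝ f) x (Pi.single k 1) (Pi.single l 1) := by
    change fderiv ℝ (fun y => fderiv ℝ f y (Pi.single l 1)) x (Pi.single k 1) = _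
    rw [fderiv_clm_apply hdf (differentiableAt_const _)]
    simp
  rw [hsnd, hsnd, hf.isSymmSndFDerivAt (by simp)]

lemma contDiffAt_pd (hf : ContDiffAt ℝ n f x) (hmn : m + 1 ≤ n) (i : Fin 3) :
    ContDiffAt ℝ m (pd i f) x :=
  (hf.fderiv_right hmn).clm_apply contDiffAt_const

lemma pdphi_congr_of_eventuallyEq (h : f =ᶠ[𝓝 x] g) : pdphi φ i f x = pdphi φ i g x := by
  simp only [pdphi, pd, h.fderiv_eq]

lemma pdphi_sub (hf : DifferentiableAt ℝ f x) (hg : DifferentiableAt ℝ g x) :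
    pdphi φ i (fun y => f y - g y) x = pdphi φ i f x - pdphi φ i g x := by
  unfold pdphi
  split <;> simp only [pd_sub hf hg] <;> ring

lemma pdphi_mul (hf : DifferentiableAt ℝ f x) (hg : DifferentiableAt ℝ g x) :
    pdphi φ i (fun y => f y * g y) x = pdphi φ i f x * g x + f x * pdphi φ i g x := by
  unfold pdphi
  split <;> simp only [pd_mul hf hg] <;> ring

lemma contDiffAt_pdphi (hφ : ContDiffAt ℝ n φ x) (hf : ContDiffAt ℝ n f x) (hmn : m + 1 ≤ n)
    (hφx : pd 2 φ x ≠ 0) (i : Fin 3) : ContDiffAt ℝ m (pdphi φ i f) x := by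
  have hpd (g) (hg : ContDiffAt ℝ n g x) (k : Fin 3) := contDiffAt_pd hg hmn k
  unfold pdphi
  split_ifs with hi
  · exact (hpd f hf 2).div (hpd φ hφ 2) hφx
  · exact (hpd f hf i).sub (((hpd φ hφ i).div (hpd φ hφ 2) hφx).mul (hpd f hf 2))

lemma pdphi_two : pdphi φ 2 f x = pd 2 f x / pd 2 φ x := if_pos rfl

lemma pdphi_of_ne_two (hi : i ≠ 2) : pdphi φ i f x = pd i f x - pd i φ x * pdphi φ 2 f x := by
  simp only [pdphi, if_neg hi, if_pos]
  ring

lemma pd_pdphi_two (hf : DifferentiableAt ℝ (pd 2 f) x) (hφ : DifferentiableAt ℝ (pd 2 φ) x)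
    (hφx : pd 2 φ x ≠ 0) (k : Fin 3) :
    pd k (pdphi φ 2 f) x = (pd k (pd 2 f) x - pdphi φ 2 f x * pd k (pd 2 φ) x) / pd 2 φ x := by
  have hquot : pdphi φ 2 f = fun y => pd 2 f y / pd 2 φ y := funext fun _ => pdphi_two
  rw [hquot, pd_div hf hφ hφx]
  field_simp

lemma pdphi_pdphi_two_comm (hφ : ContDiffAt ℝ 2 φ x) (hf : ContDiffAt ℝ 2 f x)
    (hφx : pd 2 φ x ≠ 0) (i : Fin 3) :
    pdphi φ i (pdphi φ 2 f) x = pdphi φ 2 (pdphi φ i f) x := by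
  rcases eq_or_ne i 2 with rfl | hi
  · rfl
  have hdiff {g : (Fin 3 → ℝ) → ℝ} (hg : ContDiffAt ℝ 2 g x) (k : Fin 3) :
      DifferentiableAt ℝ (pd k g) x :=
    (contDiffAt_pd hg (m := 1) le_rfl k).differentiableAt one_ne_zero
  have hdiff_quot : DifferentiableAt ℝ (pdphi φ 2 f) x :=
    (contDiffAt_pdphi hφ hf (m := 1) le_rfl hφx 2).differentiableAt one_ne_zero
  have hF : pdphi φ i f = fun y => pd i f y - pd i φ y * pdphi φ 2 f y :=
    funext fun _ => pdphi_of_ne_two hi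
  rw [pdphi_of_ne_two hi, pdphi_two (f := pdphi φ 2 f), pdphi_two (f := pdphi φ i f), hF,
    pd_sub (hdiff hf i) ((hdiff hφ i).fun_mul hdiff_quot), pd_mul (hdiff hφ i) hdiff_quot,
    pd_pdphi_two (hdiff hf 2) (hdiff hφ 2) hφx, pd_pdphi_two (hdiff hf 2) (hdiff hφ 2) hφx,
    pd_comm hf (i := i), pd_comm hφ (i := i)]
  field_simp
  ring

lemma alinhac_first_order (hφ : ContDiffAt ℝ 2 φ x) (hv : ContDiffAt ℝ 2 v x)
    (hvdot : DifferentiableAt ℝ vdot x) (hφdot : DifferentiableAt ℝ φdot x)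
    (hφx : pd 2 φ x ≠ 0) (j : Fin 3) :
    pdphi φ j (fun y => vdot y - pdphi φ 2 v y * φdot y) x
      = pdphi φ j vdot x - pdphi φ 2 v x * pdphi φ j φdot x
        - φdot x * pdphi φ 2 (pdphi φ j v) x := by
  have hdv : DifferentiableAt ℝ (pdphi φ 2 v) x :=
    (contDiffAt_pdphi hφ hv (m := 1) le_rfl hφx 2).differentiableAt one_ne_zero
  rw [pdphi_sub hvdot (hdv.fun_mul hφdot), pdphi_mul hdv hφdot, pdphi_pdphi_two_comm hφ hv hφx j]
  ring

lemma alinhac_first_order_eventuallyEq (hφ : ContDiffAt ℝ 2 φ x) (hv : ContDiffAt ℝ 2 v x)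
    (hvdot : ContDiffAt ℝ 1 vdot x) (hφdot : ContDiffAt ℝ 1 φdot x) (hφx : pd 2 φ x ≠ 0)
    (j : Fin 3) :
    pdphi φ j (fun y => vdot y - pdphi φ 2 v y * φdot y) =ᶠ[𝓝 x]
      fun y => pdphi φ j vdot y - pdphi φ 2 v y * pdphi φ j φdot y
        - φdot y * pdphi φ 2 (pdphi φ j v) y := by
  have hφne : ∀ᶠ y in 𝓝 x, pd 2 φ y ≠ 0 :=
    (contDiffAt_pd hφ (m := 0) (by norm_num) 2).continuousAt.eventually_ne hφx
  filter_upwards [hφ.eventually (by simp), hv.eventually (by simp), hvdot.eventually (by simp),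
    hφdot.eventually (by simp), hφne] with y hφy hvy hvdoty hφdoty hy
  exact alinhac_first_order hφy hvy (hvdoty.differentiableAt one_ne_zero)
    (hφdoty.differentiableAt one_ne_zero) hy j

lemma alinhac_second_order_at (hφ : ContDiffAt ℝ 3 φ x) (hv : ContDiffAt ℝ 3 v x)
    (hvdot : ContDiffAt ℝ 2 vdot x) (hφdot : ContDiffAt ℝ 2 φdot x) (hφx : pd 2 φ x ≠ 0)
    (i j : Fin 3) :
    pdphi φ i (fun y => pdphi φ j vdot y - pdphi φ 2 v y * pdphi φ j φdot y) x
        - pdphi φ i φdot x * pdphi φ 2 (pdphi φ j v) x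
      = pdphi φ i (pdphi φ j (fun y => vdot y - pdphi φ 2 v y * φdot y)) x
        + φdot x * pdphi φ 2 (pdphi φ i (pdphi φ j v)) x := by
  have hφ2 : ContDiffAt ℝ 2 φ x := hφ.of_le (by norm_num)
  have hjv : ContDiffAt ℝ 2 (pdphi φ j v) x := contDiffAt_pdphi hφ hv (by norm_num) hφx j
  have hfirst := alinhac_first_order_eventuallyEq hφ2 (hv.of_le (by norm_num))
    (hvdot.of_le (by norm_num)) (hφdot.of_le (by norm_num)) hφx j
  have hdA : DifferentiableAt ℝ
      (fun y => pdphi φ j vdot y - pdphi φ 2 v y * pdphi φ j φdot y) x :=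
    ((contDiffAt_pdphi hφ2 hvdot (m := 1) le_rfl hφx j).sub
      ((contDiffAt_pdphi hφ hv (m := 1) (by norm_num) hφx 2).mul
        (contDiffAt_pdphi hφ2 hφdot (m := 1) le_rfl hφx j))).differentiableAt one_ne_zero
  have hdH : DifferentiableAt ℝ (pdphi φ 2 (pdphi φ j v)) x :=
    (contDiffAt_pdphi hφ2 hjv (m := 1) le_rfl hφx 2).differentiableAt one_ne_zero
  have hdφdot : DifferentiableAt ℝ φdot x := hφdot.differentiableAt two_ne_zero
  rw [pdphi_congr_of_eventuallyEq hfirst, pdphi_sub hdA (hdφdot.fun_mul hdH), pdphi_mul hdφdot hdH,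
    pdphi_pdphi_two_comm hφ2 hjv hφx i]
  ring

end

/-- Alinhac's second-order identity (2.28) of Lemma 2.7:
`∂ᵢ^φ(∂ⱼ^φ v̇ − (∂_z^φ v)(∂ⱼ^φ φ̇)) − (∂ᵢ^φ φ̇) ∂_z^φ(∂ⱼ^φ v)
  = ∂ᵢ^φ ∂ⱼ^φ (v̇ − (∂_z^φ v) φ̇) + φ̇ ∂_z^φ(∂ᵢ^φ ∂ⱼ^φ v)`. -/
theorem alinhac_second_order (Ω : Set (Fin 3 → ℝ)) (hΩ : IsOpen Ω)
    (φ v vdot φdot : (Fin 3 → ℝ) → ℝ)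
    (hφ : ContDiffOn ℝ 3 φ Ω) (hv : ContDiffOn ℝ 3 v Ω)
    (hvdot : ContDiffOn ℝ 2 vdot Ω) (hφdot : ContDiffOn ℝ 2 φdot Ω)
    (hz : ∀ x ∈ Ω, pd 2 φ x ≠ 0) :
    ∀ i j : Fin 3, ∀ x ∈ Ω,
      pdphi φ i (fun y => pdphi φ j vdot y - pdphi φ 2 v y * pdphi φ j φdot y) x
          - pdphi φ i φdot x * pdphi φ 2 (pdphi φ j v) x
        = pdphi φ i (pdphi φ j (fun y => vdot y - pdphi φ 2 v y * φdot y)) x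
          + φdot x * pdphi φ 2 (pdphi φ i (pdphi φ j v)) x := by
  intro i j x hx
  have hΩx := hΩ.mem_nhds hx
  exact alinhac_second_order_at (hφ.contDiffAt hΩx) (hv.contDiffAt hΩx) (hvdot.contDiffAt hΩx)
    (hφdot.contDiffAt hΩx) (hz x hx) i j
end
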